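/- There are infinitely many consensus methods that are regular, refinement-stable and non-contradictory: the set of families φ = (φ_{n,k})_{n ≥ 1, k ≥ 1}, where each φ_{n,k} maps profiles of k hierarchies on {1, …, n} to hierarchies on {1, …, n} and where every φ_{n,k} is unanimous, anonymous, neutral, refinement-stable and non-contradictory, is infinite. -/

import Mathlib

/-- Two clusters (nonempty subsets of the taxon set) are compatible if one
contains the other or they are disjoint. -/
def Compatible {X : Type*} (c₁ c₂ : Set X) : Prop :=
  c₁ ⊆ c₂ ∨ c₂ ⊆ c₁ ∨ c₁ ∩ c₂ = ∅

/-- A hierarchy on `X`: a family of pairwise compatible nonempty clusters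
containing `X` itself and all singletons (the cluster encoding of a rooted
phylogenetic `X`-tree). -/
def IsHierarchy {X : Type*} (H : Set (Set X)) : Prop :=
  (∀ c ∈ H, c.Nonempty) ∧
  (∀ c₁ ∈ H, ∀ c₂ ∈ H, Compatible c₁ c₂) ∧
  Set.univ ∈ H ∧
  ∀ x : X, {x} ∈ H

/-- The strict consensus of a profile: all clusters present in every tree. -/
def strictCons {X : Type*} {k : ℕ} (P : Fin k → Set (Set X)) : Set (Set X) :=
  {c | ∀ i, c ∈ P i}

/-- The majority-rule consensus `MR_p`: all clusters present in at least `p·k`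
of the input trees. -/
def majCons {X : Type*} (p : ℝ) {k : ℕ} (P : Fin k → Set (Set X)) : Set (Set X) :=
  {c | p * (k : ℝ) ≤ (({i : Fin k | c ∈ P i}).ncard : ℝ)}

/-- The loose consensus: all clusters present in at least one input tree and
compatible with every cluster of every input tree. -/
def looseCons {X : Type*} {k : ℕ} (P : Fin k → Set (Set X)) : Set (Set X) :=
  {c | (∃ i, c ∈ P i) ∧ ∀ j, ∀ c' ∈ P j, Compatible c c'}

/-- A hierarchy on `{1, …, n}` (as a subtype). -/
def Hier (n : ℕ) := {H : Set (Set (Fin n)) // IsHierarchy H}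


/-!
For every threshold `p ∈ (1/2, 1]` the majority-rule consensus `MR_p`, which keeps the clusters
occurring in at least `p·k` of the `k` input trees, is such a method. Two clusters kept by `MR_p`
occur together in some input tree, since each occurs in more than half of them, so they are
compatible. Distinct thresholds `p < q` give distinct methods: on three taxa take `k` trees of
which `m` contain a fixed two-element cluster and the others are the star tree, with
`p·k ≤ m < q·k`.
-/

open Set

section Compatible

variable {X : Type*}

theorem Compatible.symm {c₁ c₂ : Set X} (h : Compatible c₁ c₂) : Compatible c₂ c₁ := by
  rcases h with h | h | h
  · exact Or.inr (Or.inl h)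
  · exact Or.inl h
  · exact Or.inr (Or.inr (by rwa [inter_comm]))

theorem compatible_refl (c : Set X) : Compatible c c := Or.inl subset_rfl

theorem compatible_univ (c : Set X) : Compatible c univ := Or.inl (subset_univ c)

theorem compatible_singleton (c : Set X) (x : X) : Compatible c {x} := by
  by_cases hx : x ∈ c
  · exact Or.inr (Or.inl (singleton_subset_iff.mpr hx))
  · exact Or.inr (Or.inr (inter_singleton_eq_empty.mpr hx))

/-- The star tree with the one extra cluster `c`; for `c = univ` it is the star tree itself. -/
def hierarchyWith (c : Set X) : Set (Set X) :=
  insert c (insert univ (range singleton))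

theorem isHierarchy_hierarchyWith {c : Set X} (hc : c.Nonempty) :
    IsHierarchy (hierarchyWith c) := by
  have compatible_trivial : ∀ d : Set X, ∀ e ∈ insert univ (range singleton), Compatible d e := by
    rintro d e (rfl | ⟨x, rfl⟩)
    exacts [compatible_univ d, compatible_singleton d x]
  refine ⟨?_, ?_, mem_insert_of_mem _ (mem_insert _ _),
    fun x => mem_insert_of_mem _ (mem_insert_of_mem _ ⟨x, rfl⟩)⟩
  · rintro d (rfl | rfl | ⟨x, rfl⟩)
    exacts [hc, hc.mono (subset_univ _), singleton_nonempty x]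
  · rintro d₁ hd₁ d₂ (rfl | hd₂)
    · rcases hd₁ with rfl | hd₁
      exacts [compatible_refl _, (compatible_trivial _ d₁ hd₁).symm]
    · exact compatible_trivial d₁ d₂ hd₂

theorem not_mem_hierarchyWith_univ {c : Set X} {a b z : X} (hab : a ≠ b) (ha : a ∈ c)
    (hb : b ∈ c) (hz : z ∉ c) : c ∉ hierarchyWith univ := by
  rintro (rfl | rfl | ⟨x, rfl⟩)
  exacts [hz trivial, hz trivial, hab (ha.trans hb.symm)]

end Compatible

section MajorityRule

variable {X : Type*} {p q : ℝ} {k : ℕ} {P : Fin k → Set (Set X)} {c : Set X}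

theorem exists_mem_of_mem_majCons (hp : 0 < p) (hk : 0 < k) (hc : c ∈ majCons p P) :
    ∃ i, c ∈ P i := by
  by_contra! h
  have hempty : {i | c ∈ P i} = ∅ := eq_empty_of_forall_notMem h
  have : 0 < p * k := by positivity
  simp only [majCons, mem_ofPred_eq, hempty, ncard_empty, Nat.cast_zero] at hc
  linarith

theorem exists_mem_mem_of_mem_majCons {c₁ c₂ : Set X} (hp : 1 / 2 < p) (hk : 0 < k)
    (h₁ : c₁ ∈ majCons p P) (h₂ : c₂ ∈ majCons p P) : ∃ i, c₁ ∈ P i ∧ c₂ ∈ P i := by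
  suffices hlt : Nat.card (Fin k) < {i | c₁ ∈ P i}.ncard + {i | c₂ ∈ P i}.ncard from
    nonempty_inter_of_lt_ncard_add_ncard hlt
  have hhalf : (k : ℝ) / 2 < p * k := by
    have : (0 : ℝ) < k := by exact_mod_cast hk
    nlinarith
  have hlt : (k : ℝ) < {i | c₁ ∈ P i}.ncard + {i | c₂ ∈ P i}.ncard := by
    simp only [majCons, mem_ofPred_eq] at h₁ h₂
    linarith
  rw [Nat.card_eq_fintype_card, Fintype.card_fin]
  exact_mod_cast hlt

theorem mem_majCons_of_forall_mem (hp1 : p ≤ 1) (hc : ∀ i, c ∈ P i) : c ∈ majCons p P := by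
  have huniv : {i | c ∈ P i} = univ := eq_univ_of_forall hc
  simp only [majCons, mem_ofPred_eq, huniv, ncard_univ, Nat.card_eq_fintype_card,
    Fintype.card_fin]
  exact mul_le_of_le_one_left (Nat.cast_nonneg k) hp1

theorem isHierarchy_majCons (hp : 1 / 2 < p) (hp1 : p ≤ 1) (hk : 0 < k)
    (hP : ∀ i, IsHierarchy (P i)) : IsHierarchy (majCons p P) := by
  refine ⟨fun c hc => ?_, fun c₁ h₁ c₂ h₂ => ?_, mem_majCons_of_forall_mem hp1 fun i => (hP i).2.2.1,
    fun x => mem_majCons_of_forall_mem hp1 fun i => (hP i).2.2.2 x⟩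
  · obtain ⟨i, hi⟩ := exists_mem_of_mem_majCons (by linarith) hk hc
    exact (hP i).1 c hi
  · obtain ⟨i, hi₁, hi₂⟩ := exists_mem_mem_of_mem_majCons hp hk h₁ h₂
    exact (hP i).2.1 c₁ hi₁ c₂ hi₂

theorem majCons_const (hp : 0 < p) (hp1 : p ≤ 1) (hk : 0 < k) (H : Set (Set X)) :
    majCons p (fun _ : Fin k => H) = H := by
  ext c
  refine ⟨fun hc => ?_, fun hc => mem_majCons_of_forall_mem hp1 fun _ => hc⟩
  obtain ⟨_, hi⟩ := exists_mem_of_mem_majCons hp hk hc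
  exact hi

theorem majCons_comp_perm (P : Fin k → Set (Set X)) (π : Equiv.Perm (Fin k)) :
    majCons p (P ∘ π) = majCons p P := by
  ext c
  have hpre : {i | c ∈ (P ∘ π) i} = π ⁻¹' {i | c ∈ P i} := rfl
  simp only [majCons, mem_ofPred_eq, hpre,
    ncard_preimage_of_injective_subset_range π.injective (by simp)]

theorem majCons_image_equiv {Y : Type*} (P : Fin k → Set (Set X)) (e : X ≃ Y) :
    majCons p (fun i => image e '' P i) = image e '' majCons p P := by
  have hinj : Function.Injective (image e) := image_injective.mpr e.injective
  ext c
  obtain ⟨d, rfl⟩ := image_surjective.mpr e.surjective c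
  simp only [majCons, mem_ofPred_eq, hinj.mem_set_image]

theorem majCons_mono {P' : Fin k → Set (Set X)} (h : ∀ i, P i ⊆ P' i) :
    majCons p P ⊆ majCons p P' := fun c (hc : p * k ≤ _) =>
  hc.trans (by exact_mod_cast ncard_le_ncard fun i (hi : c ∈ P i) => h i hi)

theorem exists_nat_mul_le_lt_mul (hp : 0 ≤ p) (hp1 : p ≤ 1) (hpq : p < q) :
    ∃ k m : ℕ, m ≤ k + 1 ∧ p * (k + 1 : ℕ) ≤ m ∧ (m : ℝ) < q * (k + 1 : ℕ) := by
  obtain ⟨k, hk⟩ := exists_nat_gt (1 / (q - p))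
  have hgap : 1 < (q - p) * (k + 1 : ℕ) := by
    rw [div_lt_iff₀ (sub_pos.mpr hpq)] at hk
    push_cast
    nlinarith
  have hK : (0 : ℝ) ≤ (k + 1 : ℕ) := Nat.cast_nonneg _
  refine ⟨k, ⌈p * (k + 1 : ℕ)⌉₊, Nat.ceil_le.mpr ?_, Nat.le_ceil _, ?_⟩
  · exact mul_le_of_le_one_left hK hp1
  · linarith [Nat.ceil_lt_add_one (mul_nonneg hp hK)]

theorem exists_profile_mem_majCons_not_mem_majCons {α : Type*} {f : α → Set (Set X)}
    {a₁ a₂ : α} (h₁ : c ∈ f a₁) (h₂ : c ∉ f a₂) (hp : 0 ≤ p) (hp1 : p ≤ 1) (hpq : p < q) :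
    ∃ (k : ℕ) (P : Fin (k + 1) → α),
      c ∈ majCons p (fun i => f (P i)) ∧ c ∉ majCons q (fun i => f (P i)) := by
  classical
  obtain ⟨k, m, hm, hpm, hmq⟩ := exists_nat_mul_le_lt_mul hp hp1 hpq
  obtain ⟨S, -, hS⟩ := exists_subset_card_eq (s := (univ : Set (Fin (k + 1)))) (n := m)
    (by rwa [ncard_univ, Nat.card_eq_fintype_card, Fintype.card_fin])
  have hcount : {i | c ∈ f (if i ∈ S then a₁ else a₂)} = S := by
    ext i
    by_cases hi : i ∈ S <;> simp [hi, h₁, h₂]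
  refine ⟨k, fun i => if i ∈ S then a₁ else a₂, ?_, ?_⟩
  · simpa only [majCons, mem_ofPred_eq, hcount, hS] using hpm
  · simpa only [majCons, mem_ofPred_eq, hcount, hS, not_le] using hmq

end MajorityRule

def majorityRule (p : Ioc (1 / 2 : ℝ) 1) :
    ∀ n k : ℕ, (Fin (k + 1) → Hier (n + 1)) → Hier (n + 1) :=
  fun _ k P => ⟨majCons p (fun i => (P i).1),
    isHierarchy_majCons p.2.1 p.2.2 k.succ_pos fun i => (P i).2⟩

theorem majorityRule_injective : Function.Injective majorityRule := by
  have hnot : ({0, 1} : Set (Fin 3)) ∉ hierarchyWith univ :=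
    not_mem_hierarchyWith_univ (a := 0) (b := 1) (z := 2) (by decide) (by simp) (by simp)
      (by simp)
  have separate : ∀ p q : Ioc (1 / 2 : ℝ) 1, p < q → majorityRule p ≠ majorityRule q := by
    intro p q hpq heq
    obtain ⟨k, P, hp, hq⟩ := exists_profile_mem_majCons_not_mem_majCons (f := Subtype.val)
      (a₁ := (⟨_, isHierarchy_hierarchyWith (insert_nonempty 0 {1})⟩ : Hier 3))
      (a₂ := ⟨_, isHierarchy_hierarchyWith (univ_nonempty (α := Fin 3))⟩)
      (mem_insert _ _) hnot (by linarith [p.2.1]) p.2.2 hpq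
    have hp' : ({0, 1} : Set (Fin 3)) ∈ (majorityRule p 2 k P).1 := hp
    exact hq (show _ ∈ (majorityRule q 2 k P).1 from heq ▸ hp')
  exact fun p q heq => le_antisymm (not_lt.mp fun h => separate q p h heq.symm)
    (not_lt.mp fun h => separate p q h heq)

/-- There are infinitely many consensus methods `φ = (φ_{n,k})_{n≥1,k≥1}`
(with `φ_{n,k}` mapping profiles of `k` hierarchies on `{1, …, n}` to
hierarchies on `{1, …, n}`) each of which is unanimous, anonymous, neutral,
refinement-stable and non-contradictory. -/
theorem infinitely_many_regular_refinementStable_noncontradictory :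
    {φ : ∀ n k : ℕ, (Fin (k + 1) → Hier (n + 1)) → Hier (n + 1) |
      ∀ n k : ℕ,
        -- unanimity
        (∀ H : Hier (n + 1), φ n k (fun _ => H) = H) ∧
        -- anonymity
        (∀ (P : Fin (k + 1) → Hier (n + 1)) (π : Equiv.Perm (Fin (k + 1))),
          φ n k (fun i => P (π i)) = φ n k P) ∧
        -- neutrality
        (∀ (P P' : Fin (k + 1) → Hier (n + 1)) (σ : Equiv.Perm (Fin (n + 1))),
          (∀ i, (P' i).1 = (Set.image σ) '' (P i).1) →
          (φ n k P').1 = (Set.image σ) '' (φ n k P).1) ∧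
        -- refinement-stability
        (∀ P P' : Fin (k + 1) → Hier (n + 1),
          (∀ i, (P i).1 ⊆ (P' i).1) → (φ n k P).1 ⊆ (φ n k P').1) ∧
        -- non-contradiction
        (∀ P : Fin (k + 1) → Hier (n + 1), ∀ c ∈ (φ n k P).1,
          ∃ i, ∀ c' ∈ (P i).1, Compatible c c')}.Infinite := by
  have : Infinite (Ioc (1 / 2 : ℝ) 1) := (Ioc_infinite (by norm_num)).to_subtype
  refine infinite_of_injective_forall_mem majorityRule_injective fun p n k => ?_
  have hp : (0 : ℝ) < p := by linarith [p.2.1]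
  refine ⟨fun H => Subtype.ext (majCons_const hp p.2.2 k.succ_pos H.1),
    fun P π => Subtype.ext (majCons_comp_perm (fun i => (P i).1) π),
    fun P P' σ h => ?_, fun P P' h => majCons_mono h, fun P c hc => ?_⟩
  · change majCons p (fun i => (P' i).1) = image σ '' majCons p (fun i => (P i).1)
    rw [show (fun i => (P' i).1) = fun i => image σ '' (P i).1 from funext h]
    exact majCons_image_equiv (fun i => (P i).1) σ
  · obtain ⟨i, hi⟩ := exists_mem_of_mem_majCons hp k.succ_pos hc
    exact ⟨i, (P i).2.2.1 c hi⟩
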